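/- For any a > 0, the internal discharge power g(d) = d / (0.5 + 0.5·√(1 − a·d)) is convex and strictly increasing on [0, 1/a]. -/

import Mathlib

/-!
Rationalising the denominator, `(1 + √(1 - a d)) (1 - √(1 - a d)) = a d` gives
`g(d) = (2 / a) (1 - √(1 - a d))` on `[0, 1/a]`. Since `d ↦ √(1 - a d)` is concave (a square
root of an affine function) and strictly decreasing, `g` is convex and strictly increasing.
-/

open Real Set

lemma div_half_add_half_sqrt_one_sub_mul {a d : ℝ} (ha : a ≠ 0) (had : a * d ≤ 1) :
    d / (0.5 + 0.5 * √(1 - a * d)) = 2 / a * (1 - √(1 - a * d)) := by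
  have hsq : √(1 - a * d) ^ 2 = 1 - a * d := sq_sqrt (by linarith)
  have hden : 0 < 0.5 + 0.5 * √(1 - a * d) := by positivity
  set s := √(1 - a * d)
  have hd : d = (1 - s ^ 2) / a := by rw [hsq]; field_simp; ring
  rw [div_eq_iff hden.ne', hd]
  field_simp
  ring

lemma concaveOn_sqrt_one_sub_mul (a : ℝ) :
    ConcaveOn ℝ {d | a * d ≤ 1} fun d => √(1 - a * d) := by
  have h := strictConcaveOn_sqrt.concaveOn.comp_affineMap (AffineMap.lineMap (1 : ℝ) (1 - a))
  convert h using 1 <;> ext d <;> simp [AffineMap.lineMap_apply] <;> ring_nf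

lemma strictAntiOn_sqrt_one_sub_mul {a : ℝ} (ha : 0 < a) :
    StrictAntiOn (fun d => √(1 - a * d)) {d | a * d ≤ 1} := fun x _ y hy hxy =>
  sqrt_lt_sqrt (by linarith [hy.out]) (by nlinarith)

/-- For any `a > 0`, the internal discharge power `g(d) = d / (0.5 + 0.5·√(1 - a·d))`
is convex and strictly increasing on `[0, 1/a]`. -/
theorem stmt_5 (a : ℝ) (ha : 0 < a) :
    ConvexOn ℝ (Set.Icc 0 (1 / a))
      (fun d : ℝ => d / (0.5 + 0.5 * Real.sqrt (1 - a * d))) ∧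
    StrictMonoOn (fun d : ℝ => d / (0.5 + 0.5 * Real.sqrt (1 - a * d)))
      (Set.Icc 0 (1 / a)) := by
  have hsub : Icc 0 (1 / a) ⊆ {d | a * d ≤ 1} := fun d hd => (le_div_iff₀' ha).mp hd.2
  have heq : EqOn (fun d => 2 / a * (1 - √(1 - a * d)))
      (fun d => d / (0.5 + 0.5 * √(1 - a * d))) (Icc 0 (1 / a)) := fun d hd =>
    (div_half_add_half_sqrt_one_sub_mul ha.ne' (hsub hd)).symm
  have hconc := (concaveOn_sqrt_one_sub_mul a).subset hsub (convex_Icc _ _)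
  have hanti := (strictAntiOn_sqrt_one_sub_mul ha).mono hsub
  constructor
  · have hconv := (convexOn_const 1 (convex_Icc 0 (1 / a))).sub hconc
    exact (hconv.smul (by positivity : (0 : ℝ) ≤ 2 / a)).congr heq
  · refine StrictMonoOn.congr (fun x hx y hy hxy => ?_) heq
    have := hanti hx hy hxy
    show 2 / a * (1 - _) < 2 / a * (1 - _)
    gcongr
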